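/- arXiv:2309.04072 — 2 statements merged into one kernel-verified Lean document; each statement's English description precedes it below -/
import Mathlib

section
/- Let n ≥ p ≥ 1, let Y ∈ ℝ^{n×p} have rank p, and suppose Y = QΣPᵀ where Q ∈ ℝ^{n×p} has orthonormal columns (QᵀQ = I_p), P ∈ ℝ^{p×p} is orthogonal, and Σ = diag(σ_1,…,σ_p) with all σ_i > 0. Let Σ̃ be the p×p diagonal matrix whose i-th diagonal entry is Σ_{j≠i} σ_i/(σ_i² + σ_j²). Then S is Fréchet differentiable at Y and for every H ∈ ℝ^{n×p}, the derivative of S at Y applied to H equals Tr((Q Σ̃ Pᵀ)ᵀ H); that is, the gradient of S at Y with respect to the Frobenius inner product is Q Σ̃ Pᵀ. -/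
open Matrix
open scoped Kronecker

attribute [local instance] Matrix.normedAddCommGroup Matrix.normedSpace

set_option linter.unusedSectionVars false
set_option maxHeartbeats 1000000

section Aux

variable {m : Type*} [Fintype m] [DecidableEq m]

/-- entry evaluation as a CLM -/
def entryCLM (a : m) (b : m) : Matrix m m ℝ →L[ℝ] ℝ :=
  (ContinuousLinearMap.proj b).comp (ContinuousLinearMap.proj (R := ℝ) (φ := fun _ : m => m → ℝ) a)

@[simp] lemma entryCLM_apply (a b : m) (X : Matrix m m ℝ) : entryCLM a b X = X a b := rfl

noncomputable def traceAdjCLM (M : Matrix m m ℝ) : Matrix m m ℝ →L[ℝ] ℝ :=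
  LinearMap.toContinuousLinearMap
    { toFun := fun H => (Matrix.adjugate M * H).trace
      map_add' := fun x y => by simp [Matrix.mul_add]
      map_smul' := fun c x => by simp [Matrix.mul_smul] }

@[simp] lemma traceAdjCLM_apply (M H : Matrix m m ℝ) :
    traceAdjCLM M H = (Matrix.adjugate M * H).trace := rfl

lemma det_updateRow_expand (M : Matrix m m ℝ) (i : m) (b : m → ℝ) :
    (M.updateRow i b).det = ∑ j, Matrix.adjugate M j i * b j := by
  have hb : b = ∑ j, b j • (Pi.single j (1 : ℝ) : m → ℝ) := by
    funext k; simp [Pi.single_apply, Finset.sum_apply]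
  have key : (M.updateRow i b).det
      = (Matrix.detRowAlternating (R := ℝ) (n := m)) (Function.update M i b) := rfl
  rw [key]
  conv_lhs => rw [hb]
  rw [(Matrix.detRowAlternating (R := ℝ) (n := m)).map_update_sum Finset.univ i
    (fun j => b j • (Pi.single j (1:ℝ) : m → ℝ)) M]
  refine Finset.sum_congr rfl fun j _ => ?_
  refine ((Matrix.detRowAlternating (R := ℝ) (n := m)).map_update_smul M i (b j) _).trans ?_
  rw [Matrix.adjugate_apply, smul_eq_mul, mul_comm]
  rfl

lemma sum_det_updateRow (M H : Matrix m m ℝ) :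
    ∑ i, (M.updateRow i (H i)).det = (Matrix.adjugate M * H).trace := by
  simp only [det_updateRow_expand, Matrix.trace, Matrix.diag, Matrix.mul_apply]
  rw [Finset.sum_comm]

theorem hasFDerivAt_det' (M : Matrix m m ℝ) :
    HasFDerivAt Matrix.det (traceAdjCLM M) M := by
  have h : ∀ σ : Equiv.Perm m, HasFDerivAt (fun X : Matrix m m ℝ => ∏ i, X (σ i) i)
      (∑ i, (∏ j ∈ Finset.univ.erase i, M (σ j) j) • entryCLM (σ i) i) M :=
    fun σ => HasFDerivAt.finset_prod (fun i _ => (entryCLM (σ i) i).hasFDerivAt)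
  have h2 := HasFDerivAt.sum (u := Finset.univ)
    (fun σ _ => ((h σ).const_mul (((Equiv.Perm.sign σ : ℤ) : ℝ))))
  have hdet : (Matrix.det : Matrix m m ℝ → ℝ)
      = fun X => ∑ σ : Equiv.Perm m, ((Equiv.Perm.sign σ : ℤ) : ℝ) * ∏ i, X (σ i) i :=
    funext fun X => Matrix.det_apply' X
  rw [hdet]
  have h2' : HasFDerivAt
      (∑ σ : Equiv.Perm m, fun y : Matrix m m ℝ => ((Equiv.Perm.sign σ : ℤ) : ℝ) * ∏ i, y (σ i) i)
      ((∑ σ : Equiv.Perm m, ((Equiv.Perm.sign σ : ℤ) : ℝ) •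
        ∑ i, (∏ j ∈ Finset.univ.erase i, M (σ j) j) • entryCLM (σ i) i : Matrix m m ℝ →L[ℝ] ℝ)) M := h2
  refine (h2'.congr_fderiv (Eq.symm ?_)).congr_of_eventuallyEq (Filter.Eventually.of_forall fun X => ?_)
  swap
  · simp [Finset.sum_apply]
  ext H
  simp only [traceAdjCLM_apply, ContinuousLinearMap.coe_sum', Finset.sum_apply,
    ContinuousLinearMap.coe_smul', Pi.smul_apply, entryCLM_apply, smul_eq_mul]
  rw [← sum_det_updateRow]
  have hterm : ∀ k : m, (M.updateRow k (H k)).det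
      = ∑ σ : Equiv.Perm m, ((Equiv.Perm.sign σ : ℤ) : ℝ) *
          (H k (σ.symm k) * ∏ j ∈ Finset.univ.erase (σ.symm k), M (σ j) j) := by
    intro k
    rw [Matrix.det_apply']
    refine Finset.sum_congr rfl fun σ _ => ?_
    congr 1
    rw [← Finset.mul_prod_erase Finset.univ _ (Finset.mem_univ (σ.symm k))]
    have h1 : (M.updateRow k (H k)) (σ (σ.symm k)) (σ.symm k) = H k (σ.symm k) := by
      rw [Equiv.apply_symm_apply, Matrix.updateRow_self]
    rw [h1]
    congr 1
    refine Finset.prod_congr rfl fun j hj => ?_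
    have : σ j ≠ k := by
      intro hc
      exact (Finset.mem_erase.mp hj).1 (by rw [← hc]; simp)
    rw [Matrix.updateRow_ne this]
  simp only [hterm]
  rw [Finset.sum_comm]
  refine Finset.sum_congr rfl fun σ _ => ?_
  rw [← Finset.mul_sum]
  congr 1
  rw [← Equiv.sum_comp σ.symm (fun i => (∏ j ∈ Finset.univ.erase i, M (σ j) j) * H (σ i) i)]
  refine Finset.sum_congr rfl fun k _ => ?_
  rw [Equiv.apply_symm_apply, mul_comm]

lemma adjugate_eq_det_smul (A B : Matrix m m ℝ) (hAB : A * B = 1) :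
    Matrix.adjugate A = A.det • B := by
  calc Matrix.adjugate A = Matrix.adjugate A * (A * B) := by rw [hAB, mul_one]
    _ = (Matrix.adjugate A * A) * B := by rw [mul_assoc]
    _ = A.det • B := by rw [Matrix.adjugate_mul, Matrix.smul_mul, one_mul]

lemma trace_diagonal_mul (w : m → ℝ) (N : Matrix m m ℝ) :
    (Matrix.diagonal w * N).trace = ∑ k, w k * N k k := by
  simp [Matrix.trace, Matrix.diag, Matrix.diagonal_mul]

end Aux

section Gram

variable {km kp : Type*} [Fintype km] [Fintype kp] [DecidableEq km] [DecidableEq kp]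

noncomputable def gramBilL : Matrix km kp ℝ →ₗ[ℝ] Matrix km kp ℝ →ₗ[ℝ] Matrix kp kp ℝ :=
  LinearMap.mk₂ ℝ (fun X Z => Xᵀ * Z)
    (fun X X' Z => by simp [Matrix.transpose_add, Matrix.add_mul])
    (fun c X Z => by simp [Matrix.transpose_smul, Matrix.smul_mul])
    (fun X Z Z' => by simp [Matrix.mul_add])
    (fun c X Z => by simp [Matrix.mul_smul])

noncomputable def gramBil : Matrix km kp ℝ →L[ℝ] Matrix km kp ℝ →L[ℝ] Matrix kp kp ℝ :=
  LinearMap.toContinuousLinearMap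
    (((LinearMap.toContinuousLinearMap :
        (Matrix km kp ℝ →ₗ[ℝ] Matrix kp kp ℝ) ≃ₗ[ℝ] _).toLinearMap).comp gramBilL)

@[simp] lemma gramBil_apply (X Z : Matrix km kp ℝ) : gramBil X Z = Xᵀ * Z := rfl

noncomputable def gramDeriv (Y : Matrix km kp ℝ) :
    Matrix km kp ℝ →L[ℝ] Matrix kp kp ℝ :=
  LinearMap.toContinuousLinearMap
    { toFun := fun H => Hᵀ * Y + Yᵀ * H
      map_add' := fun x y => by
        simp only [Matrix.transpose_add, Matrix.add_mul, Matrix.mul_add]; abel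
      map_smul' := fun c x => by
        simp only [Matrix.transpose_smul, Matrix.smul_mul, Matrix.mul_smul, ← smul_add,
          RingHom.id_apply] }

@[simp] lemma gramDeriv_apply (Y H : Matrix km kp ℝ) :
    gramDeriv Y H = Hᵀ * Y + Yᵀ * H := rfl

lemma hasFDerivAt_gram (Y : Matrix km kp ℝ) :
    HasFDerivAt (fun X : Matrix km kp ℝ => Xᵀ * X) (gramDeriv Y) Y := by
  have hb := (gramBil (km := km) (kp := kp)).isBoundedBilinearMap
  have hf : HasFDerivAt (fun X : Matrix km kp ℝ => (X, X))
      ((ContinuousLinearMap.id ℝ _).prod (ContinuousLinearMap.id ℝ _)) Y :=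
    (hasFDerivAt_id Y).prodMk (hasFDerivAt_id Y)
  have h1 := (hb.hasFDerivAt (Y, Y)).comp (f := fun X : Matrix km kp ℝ => (X, X)) Y hf
  refine h1.congr_fderiv (Eq.symm ?_)
  ext H : 1
  simp [hb.deriv_apply, add_comm]
  rfl

noncomputable def kronCLM : Matrix kp kp ℝ →L[ℝ] Matrix (kp × kp) (kp × kp) ℝ :=
  LinearMap.toContinuousLinearMap
    { toFun := fun A => A ⊗ₖ (1 : Matrix kp kp ℝ) + (1 : Matrix kp kp ℝ) ⊗ₖ A
      map_add' := fun x y => by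
        simp only [Matrix.add_kronecker, Matrix.kronecker_add]; abel
      map_smul' := fun c x => by
        simp only [Matrix.smul_kronecker, Matrix.kronecker_smul, ← smul_add, RingHom.id_apply] }

@[simp] lemma kronCLM_apply (A : Matrix kp kp ℝ) :
    kronCLM A = A ⊗ₖ (1 : Matrix kp kp ℝ) + (1 : Matrix kp kp ℝ) ⊗ₖ A := rfl

end Gram

/-- Boltzmann entropy via the Kronecker-determinant expression:
`S(Y) = (1/4)(log det(A ⊗ I_p + I_p ⊗ A) − p log 2 − log det A)` with `A = Yᵀ Y`. -/
noncomputable def boltzmannEntropy {n p : ℕ} (Y : Matrix (Fin n) (Fin p) ℝ) : ℝ :=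
  (1 / 4 : ℝ) *
    (Real.log (((Yᵀ * Y) ⊗ₖ (1 : Matrix (Fin p) (Fin p) ℝ) +
        (1 : Matrix (Fin p) (Fin p) ℝ) ⊗ₖ (Yᵀ * Y)).det)
      - (p : ℝ) * Real.log 2 - Real.log (Yᵀ * Y).det)

theorem gradient_boltzmannEntropy
    {n p : ℕ} (hp : 1 ≤ p) (hnp : p ≤ n)
    (Y : Matrix (Fin n) (Fin p) ℝ) (hY : Y.rank = p)
    (Q : Matrix (Fin n) (Fin p) ℝ) (P : Matrix (Fin p) (Fin p) ℝ) (σ : Fin p → ℝ)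
    (hQ : Qᵀ * Q = 1) (hP : Pᵀ * P = 1) (hσ : ∀ i, 0 < σ i)
    (hSVD : Y = Q * Matrix.diagonal σ * Pᵀ)
    (Sig : Matrix (Fin p) (Fin p) ℝ)
    (hSig : Sig = Matrix.diagonal fun i => ∑ j ∈ Finset.univ.erase i,
        σ i / ((σ i) ^ 2 + (σ j) ^ 2)) :
    DifferentiableAt ℝ (boltzmannEntropy (n := n) (p := p)) Y ∧
      ∀ H : Matrix (Fin n) (Fin p) ℝ,
        fderiv ℝ (boltzmannEntropy (n := n) (p := p)) Y H =
          Matrix.trace ((Q * Sig * Pᵀ)ᵀ * H) := by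
  classical
  set A : Matrix (Fin p) (Fin p) ℝ := Yᵀ * Y with hA
  set M : Matrix (Fin p × Fin p) (Fin p × Fin p) ℝ :=
      A ⊗ₖ (1 : Matrix (Fin p) (Fin p) ℝ) + (1 : Matrix (Fin p) (Fin p) ℝ) ⊗ₖ A with hM
  have hPPT : P * Pᵀ = 1 := mul_eq_one_comm.mp hP
  -- A in terms of the SVD
  have hAPD : A = P * Matrix.diagonal (fun i => σ i ^ 2) * Pᵀ := by
    rw [hA, hSVD]
    simp only [Matrix.transpose_mul, Matrix.transpose_transpose, Matrix.diagonal_transpose,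
      Matrix.mul_assoc]
    rw [← Matrix.mul_assoc Qᵀ Q, hQ, Matrix.one_mul,
      ← Matrix.mul_assoc (Matrix.diagonal σ), Matrix.diagonal_mul_diagonal]
    have hsq : (fun i => σ i * σ i) = fun i => σ i ^ 2 := funext fun i => (sq (σ i)).symm
    rw [hsq]
  -- explicit inverse of A
  set Ainv0 : Matrix (Fin p) (Fin p) ℝ :=
    P * Matrix.diagonal (fun i => (σ i ^ 2)⁻¹) * Pᵀ with hAinv0
  have hσ2 : ∀ i, σ i ^ 2 ≠ 0 := fun i => pow_ne_zero 2 (hσ i).ne'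
  have hAmul : A * Ainv0 = 1 := by
    rw [hAPD, hAinv0]
    calc P * Matrix.diagonal (fun i => σ i ^ 2) * Pᵀ *
          (P * Matrix.diagonal (fun i => (σ i ^ 2)⁻¹) * Pᵀ)
        = P * Matrix.diagonal (fun i => σ i ^ 2) * (Pᵀ * P) *
            Matrix.diagonal (fun i => (σ i ^ 2)⁻¹) * Pᵀ := by simp only [Matrix.mul_assoc]
      _ = P * (Matrix.diagonal (fun i => σ i ^ 2) *
            Matrix.diagonal (fun i => (σ i ^ 2)⁻¹)) * Pᵀ := by
          rw [hP, Matrix.mul_one]; simp only [Matrix.mul_assoc]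
      _ = 1 := by
          rw [Matrix.diagonal_mul_diagonal]
          have : (fun i => σ i ^ 2 * (σ i ^ 2)⁻¹) = fun _ : Fin p => (1 : ℝ) := by
            funext i; exact mul_inv_cancel₀ (hσ2 i)
          rw [this, Matrix.diagonal_one, Matrix.mul_one, hPPT]
  have hdetA : A.det ≠ 0 := by
    have := congrArg Matrix.det hAmul
    rw [Matrix.det_mul, Matrix.det_one] at this
    exact left_ne_zero_of_mul_eq_one this
  -- the Kronecker structure of M
  set PP : Matrix (Fin p × Fin p) (Fin p × Fin p) ℝ := P ⊗ₖ P with hPPdef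
  set PPT : Matrix (Fin p × Fin p) (Fin p × Fin p) ℝ := Pᵀ ⊗ₖ Pᵀ with hPPTdef
  have hPPmul : PP * PPT = 1 := by
    rw [hPPdef, hPPTdef, ← Matrix.mul_kronecker_mul, hPPT, Matrix.one_kronecker_one]
  have hPPmul' : PPT * PP = 1 := by
    rw [hPPdef, hPPTdef, ← Matrix.mul_kronecker_mul, hP, Matrix.one_kronecker_one]
  set dk : Fin p × Fin p → ℝ := fun x => σ x.1 ^ 2 + σ x.2 ^ 2 with hdk
  have hdkpos : ∀ x, 0 < dk x := fun x => add_pos (pow_pos (hσ _) 2) (pow_pos (hσ _) 2)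
  have hMPD : M = PP * Matrix.diagonal dk * PPT := by
    rw [hM, hAPD, hPPdef, hPPTdef]
    have h1 : (P ⊗ₖ P) * (Matrix.diagonal (fun i => σ i ^ 2) ⊗ₖ (1 : Matrix (Fin p) (Fin p) ℝ))
          * (Pᵀ ⊗ₖ Pᵀ)
        = (P * Matrix.diagonal (fun i => σ i ^ 2) * Pᵀ) ⊗ₖ (1 : Matrix (Fin p) (Fin p) ℝ) := by
      rw [← Matrix.mul_kronecker_mul, ← Matrix.mul_kronecker_mul, Matrix.mul_one, hPPT]
    have h2 : (P ⊗ₖ P) * ((1 : Matrix (Fin p) (Fin p) ℝ) ⊗ₖ Matrix.diagonal (fun i => σ i ^ 2))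
          * (Pᵀ ⊗ₖ Pᵀ)
        = (1 : Matrix (Fin p) (Fin p) ℝ) ⊗ₖ (P * Matrix.diagonal (fun i => σ i ^ 2) * Pᵀ) := by
      rw [← Matrix.mul_kronecker_mul, ← Matrix.mul_kronecker_mul, Matrix.mul_one, hPPT]
    rw [← h1, ← h2, ← Matrix.add_mul, ← Matrix.mul_add]
    congr 2
    rw [← Matrix.diagonal_one, Matrix.diagonal_kronecker_diagonal,
      Matrix.diagonal_kronecker_diagonal, Matrix.diagonal_add]
    congr 1
    funext x
    simp [hdk]
  set Minv0 : Matrix (Fin p × Fin p) (Fin p × Fin p) ℝ :=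
    PP * Matrix.diagonal (fun x => (dk x)⁻¹) * PPT with hMinv0
  have hMmul : M * Minv0 = 1 := by
    rw [hMPD, hMinv0]
    calc PP * Matrix.diagonal dk * PPT * (PP * Matrix.diagonal (fun x => (dk x)⁻¹) * PPT)
        = PP * Matrix.diagonal dk * (PPT * PP) * Matrix.diagonal (fun x => (dk x)⁻¹) * PPT := by
          simp only [Matrix.mul_assoc]
      _ = PP * (Matrix.diagonal dk * Matrix.diagonal (fun x => (dk x)⁻¹)) * PPT := by
          rw [hPPmul', Matrix.mul_one]; simp only [Matrix.mul_assoc]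
      _ = 1 := by
          rw [Matrix.diagonal_mul_diagonal]
          have : (fun x => dk x * (dk x)⁻¹) = fun _ : Fin p × Fin p => (1 : ℝ) := by
            funext x; exact mul_inv_cancel₀ (hdkpos x).ne'
          rw [this, Matrix.diagonal_one, Matrix.mul_one, hPPmul]
  have hdetM : M.det ≠ 0 := by
    have := congrArg Matrix.det hMmul
    rw [Matrix.det_mul, Matrix.det_one] at this
    exact left_ne_zero_of_mul_eq_one this
  -- the chain rule
  have hgram := hasFDerivAt_gram (km := Fin n) (kp := Fin p) Y
  have hkron : HasFDerivAt (⇑(kronCLM (kp := Fin p))) (kronCLM (kp := Fin p)) (Yᵀ * Y) :=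
    (kronCLM (kp := Fin p)).hasFDerivAt
  have hcomp1 := hkron.comp (g := ⇑(kronCLM (kp := Fin p)))
    (f := fun X : Matrix (Fin n) (Fin p) ℝ => Xᵀ * X) Y hgram
  have hdet1 := (hasFDerivAt_det' (kronCLM (Yᵀ * Y))).comp
    (f := fun X : Matrix (Fin n) (Fin p) ℝ => kronCLM (Xᵀ * X)) Y hcomp1
  have hdet2 := (hasFDerivAt_det' (Yᵀ * Y)).comp
    (f := fun X : Matrix (Fin n) (Fin p) ℝ => Xᵀ * X) Y hgram
  have hdetMY : (kronCLM (Yᵀ * Y)).det = M.det := by rw [kronCLM_apply]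
  have hlog1 : HasDerivAt Real.log ((kronCLM (Yᵀ * Y)).det)⁻¹ ((kronCLM (Yᵀ * Y)).det) :=
    Real.hasDerivAt_log (by rw [hdetMY]; exact hdetM)
  have hlog2 : HasDerivAt Real.log ((Yᵀ * Y).det)⁻¹ ((Yᵀ * Y).det) :=
    Real.hasDerivAt_log hdetA
  have hf1 := hlog1.comp_hasFDerivAt Y hdet1
  have hf2 := hlog2.comp_hasFDerivAt Y hdet2
  have hS := ((hf1.sub_const ((p : ℝ) * Real.log 2)).sub hf2).const_mul (1/4 : ℝ)
  have hS' : HasFDerivAt (boltzmannEntropy (n := n) (p := p))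
      ((1/4 : ℝ) • ((kronCLM (Yᵀ * Y)).det⁻¹ •
          (traceAdjCLM (kronCLM (Yᵀ * Y))).comp (kronCLM.comp (gramDeriv Y)) -
        (Yᵀ * Y).det⁻¹ • (traceAdjCLM (Yᵀ * Y)).comp (gramDeriv Y))) Y := hS
  refine ⟨hS'.differentiableAt, fun H => ?_⟩
  rw [hS'.fderiv]
  simp only [ContinuousLinearMap.smul_apply, ContinuousLinearMap.sub_apply,
    ContinuousLinearMap.comp_apply, traceAdjCLM_apply, kronCLM_apply, gramDeriv_apply,
    smul_eq_mul]
  rw [← hA, ← hM]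
  set B : Matrix (Fin p) (Fin p) ℝ := Hᵀ * Y + Yᵀ * H with hB
  set K : Matrix (Fin p) (Fin p) ℝ := Qᵀ * H * P with hK
  set C : Matrix (Fin p) (Fin p) ℝ := Pᵀ * B * P with hC
  rw [adjugate_eq_det_smul M Minv0 hMmul, adjugate_eq_det_smul A Ainv0 hAmul,
    Matrix.smul_mul, Matrix.trace_smul, smul_eq_mul, inv_mul_cancel_left₀ hdetM,
    Matrix.smul_mul, Matrix.trace_smul, smul_eq_mul, inv_mul_cancel_left₀ hdetA]
  -- conjugated perturbation
  have e1 : PPT * ((B ⊗ₖ (1 : Matrix (Fin p) (Fin p) ℝ)) * PP)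
      = C ⊗ₖ (1 : Matrix (Fin p) (Fin p) ℝ) := by
    rw [hPPdef, hPPTdef, ← Matrix.mul_kronecker_mul, ← Matrix.mul_kronecker_mul,
      Matrix.one_mul, ← Matrix.mul_assoc, hP, ← hC]
  have e2 : PPT * (((1 : Matrix (Fin p) (Fin p) ℝ) ⊗ₖ B) * PP)
      = (1 : Matrix (Fin p) (Fin p) ℝ) ⊗ₖ C := by
    rw [hPPdef, hPPTdef, ← Matrix.mul_kronecker_mul, ← Matrix.mul_kronecker_mul,
      Matrix.one_mul, ← Matrix.mul_assoc, hP, ← hC]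
  have hW : PPT * ((B ⊗ₖ (1 : Matrix (Fin p) (Fin p) ℝ)
        + (1 : Matrix (Fin p) (Fin p) ℝ) ⊗ₖ B) * PP)
      = C ⊗ₖ (1 : Matrix (Fin p) (Fin p) ℝ) + (1 : Matrix (Fin p) (Fin p) ℝ) ⊗ₖ C := by
    rw [Matrix.add_mul, Matrix.mul_add, e1, e2]
  -- trace computations
  have t1 : (Minv0 * (B ⊗ₖ (1 : Matrix (Fin p) (Fin p) ℝ)
        + (1 : Matrix (Fin p) (Fin p) ℝ) ⊗ₖ B)).trace
      = ∑ x : Fin p × Fin p, (dk x)⁻¹ * (C x.1 x.1 + C x.2 x.2) := by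
    rw [hMinv0]
    simp only [Matrix.mul_assoc]
    rw [Matrix.trace_mul_comm PP]
    simp only [Matrix.mul_assoc]
    rw [hW, trace_diagonal_mul]
    refine Finset.sum_congr rfl fun x _ => ?_
    congr 1
    simp [Matrix.kroneckerMap_apply, Matrix.one_apply_eq]
  have t2 : (Ainv0 * B).trace = ∑ i, (σ i ^ 2)⁻¹ * C i i := by
    rw [hAinv0]
    simp only [Matrix.mul_assoc]
    rw [Matrix.trace_mul_comm P]
    simp only [Matrix.mul_assoc]
    rw [← Matrix.mul_assoc Pᵀ, ← hC, trace_diagonal_mul]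
  rw [t1, t2]
  -- diagonal entries of C
  have hCform : C = Kᵀ * Matrix.diagonal σ + Matrix.diagonal σ * K := by
    rw [hC, hB, hSVD, hK]
    simp only [Matrix.transpose_mul, Matrix.transpose_transpose, Matrix.diagonal_transpose,
      Matrix.mul_add, Matrix.add_mul, Matrix.mul_assoc]
    congr 1
    · rw [hP, Matrix.mul_one]
    · rw [← Matrix.mul_assoc Pᵀ P, hP, Matrix.one_mul]
  have hCii : ∀ i, C i i = 2 * (σ i * K i i) := by
    intro i
    rw [hCform]
    simp only [Matrix.add_apply, Matrix.mul_diagonal, Matrix.diagonal_mul, Matrix.transpose_apply]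
    ring
  -- right-hand side
  have hRHS : ((Q * Sig * Pᵀ)ᵀ * H).trace
      = ∑ i, (∑ j ∈ Finset.univ.erase i, σ i / (σ i ^ 2 + σ j ^ 2)) * K i i := by
    have hSigT : Sigᵀ = Sig := by rw [hSig, Matrix.diagonal_transpose]
    rw [Matrix.transpose_mul, Matrix.transpose_mul, Matrix.transpose_transpose, hSigT]
    simp only [Matrix.mul_assoc]
    rw [Matrix.trace_mul_comm P]
    simp only [Matrix.mul_assoc]
    rw [← Matrix.mul_assoc Qᵀ H P, ← hK, hSig, trace_diagonal_mul]
  rw [hRHS]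
  -- now a purely scalar computation
  simp only [hCii]
  rw [Fintype.sum_prod_type]
  have hsymm : ∑ i, ∑ j, (dk (i, j))⁻¹ * (2 * (σ i * K i i) + 2 * (σ j * K j j))
      = 2 * ∑ i, ∑ j, (dk (i, j))⁻¹ * (2 * (σ i * K i i)) := by
    have split : ∀ i j, (dk (i, j))⁻¹ * (2 * (σ i * K i i) + 2 * (σ j * K j j))
        = (dk (i, j))⁻¹ * (2 * (σ i * K i i)) + (dk (i, j))⁻¹ * (2 * (σ j * K j j)) :=
      fun i j => mul_add _ _ _
    simp only [split, Finset.sum_add_distrib]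
    have swap : ∑ i, ∑ j, (dk (i, j))⁻¹ * (2 * (σ j * K j j))
        = ∑ i, ∑ j, (dk (i, j))⁻¹ * (2 * (σ i * K i i)) := by
      rw [Finset.sum_comm]
      refine Finset.sum_congr rfl fun i _ => Finset.sum_congr rfl fun j _ => ?_
      have : dk (j, i) = dk (i, j) := by simp [hdk, add_comm]
      rw [this]
    rw [two_mul, swap]
  rw [hsymm]
  rw [Finset.mul_sum, ← Finset.sum_sub_distrib, Finset.mul_sum]
  refine Finset.sum_congr rfl fun i _ => ?_
  -- per-index scalar identity
  have hEsplit : ∑ j, (dk (i, j))⁻¹ * (2 * (σ i * K i i))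
      = (dk (i, i))⁻¹ * (2 * (σ i * K i i))
        + ∑ j ∈ Finset.univ.erase i, (dk (i, j))⁻¹ * (2 * (σ i * K i i)) :=
    (Finset.add_sum_erase _ _ (Finset.mem_univ i)).symm
  rw [hEsplit]
  have hdiv : ∀ j, σ i / (σ i ^ 2 + σ j ^ 2) = σ i * (dk (i, j))⁻¹ := by
    intro j
    rw [div_eq_mul_inv]
  simp only [hdiv]
  rw [Finset.sum_mul]
  have hE : ∑ j ∈ Finset.univ.erase i, (dk (i, j))⁻¹ * (2 * (σ i * K i i))
      = (∑ j ∈ Finset.univ.erase i, (dk (i, j))⁻¹) * (2 * (σ i * K i i)) := by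
    rw [Finset.sum_mul]
  rw [hE]
  have hdkii : (dk (i, i)) = 2 * σ i ^ 2 := by simp [hdk]; ring
  rw [hdkii]
  have h2 : (2 * σ i ^ 2)⁻¹ * (2 * (σ i * K i i)) = (σ i ^ 2)⁻¹ * (σ i * K i i) := by
    rw [mul_inv]
    ring
  set E : ℝ := ∑ j ∈ Finset.univ.erase i, (dk (i, j))⁻¹ with hEdef
  have goal2 : ∑ j ∈ Finset.univ.erase i, σ i * (dk (i, j))⁻¹ * K i i
      = σ i * E * K i i := by
    rw [hEdef, Finset.mul_sum, Finset.sum_mul]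
  rw [goal2]
  rw [h2]
  have hσne := (hσ i).ne'
  field_simp
  ring
end

section
/- Let n ≥ p ≥ 1 and let Y, Z ∈ ℝ^{n×p} both have rank p. Then YYᵀ = ZZᵀ if and only if there exists an orthogonal matrix O ∈ ℝ^{p×p} (OᵀO = I_p) with Z = YO. In other words, the fibers of the map θ(Y) = YYᵀ on full-rank n×p real matrices are exactly the orbits of the right action of the orthogonal group O(p). -/
open Matrix

lemma isUnit_of_rank_eq_aux {p : ℕ} (A : Matrix (Fin p) (Fin p) ℝ) (h : A.rank = p) :
    IsUnit A := by
  rw [← Matrix.mulVec_surjective_iff_isUnit]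
  have htop : LinearMap.range A.mulVecLin = ⊤ := by
    apply Submodule.eq_top_of_finrank_eq
    rw [← Matrix.rank, h]
    simp
  intro v
  obtain ⟨w, hw⟩ := htop ▸ Submodule.mem_top (x := v)
  exact ⟨w, hw⟩

theorem factorization_fibers_are_orthogonal_orbits
    {n p : ℕ} (hp : 1 ≤ p) (hnp : p ≤ n)
    (Y Z : Matrix (Fin n) (Fin p) ℝ)
    (hY : Y.rank = p) (hZ : Z.rank = p) :
    Y * Yᵀ = Z * Zᵀ ↔
      ∃ O : Matrix (Fin p) (Fin p) ℝ, Oᵀ * O = 1 ∧ Z = Y * O := by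
  constructor
  · intro h
    set G := Yᵀ * Y with hGdef
    have hGrank : G.rank = p := by rw [hGdef, Matrix.rank_transpose_mul_self, hY]
    have hGunit : IsUnit G := isUnit_of_rank_eq_aux G hGrank
    have hGdet : IsUnit G.det := hGunit.map Matrix.detMonoidHom
    have hGsym : Gᵀ = G := by rw [hGdef, transpose_mul, transpose_transpose]
    have hGinvsym : (G⁻¹)ᵀ = G⁻¹ := by rw [Matrix.transpose_nonsing_inv, hGsym]
    have hGG : G * G⁻¹ = 1 := Matrix.mul_nonsing_inv G hGdet
    have hGG' : G⁻¹ * G = 1 := Matrix.nonsing_inv_mul G hGdet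
    have h2 : ∀ {k : ℕ} (W : Matrix (Fin n) (Fin k) ℝ),
        Y * (Yᵀ * W) = Z * (Zᵀ * W) := by
      intro k W
      rw [← Matrix.mul_assoc, ← Matrix.mul_assoc, h]
    have gY : ∀ {k : ℕ} (W : Matrix (Fin p) (Fin k) ℝ),
        Yᵀ * (Y * W) = G * W := by
      intro k W
      rw [← Matrix.mul_assoc, ← hGdef]
    have g1 : ∀ {k : ℕ} (W : Matrix (Fin p) (Fin k) ℝ),
        G * (G⁻¹ * W) = W := by
      intro k W
      rw [← Matrix.mul_assoc, hGG, Matrix.one_mul]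
    have g2 : ∀ {k : ℕ} (W : Matrix (Fin p) (Fin k) ℝ),
        G⁻¹ * (G * W) = W := by
      intro k W
      rw [← Matrix.mul_assoc, hGG', Matrix.one_mul]
    set M := Yᵀ * Z with hMdef
    set O := G⁻¹ * M with hOdef
    have key : Y * O * Zᵀ = Z * Zᵀ := by
      simp only [hOdef, hMdef, Matrix.mul_assoc]
      rw [← h, gY, g2, h]
    have key2 : Y * O * (Y * O)ᵀ = Z * Zᵀ := by
      simp only [hOdef, hMdef, transpose_mul, transpose_transpose, hGinvsym,
        Matrix.mul_assoc]
      rw [← h2, gY, g2, gY, g1, h]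
    have hkeyT : Z * (Y * O)ᵀ = Z * Zᵀ := by
      simp only [hOdef, hMdef, transpose_mul, transpose_transpose, hGinvsym,
        Matrix.mul_assoc]
      rw [← h2, gY, g1, h]
    have hD : (Z - Y * O) * (Z - Y * O)ᵀ = 0 := by
      rw [Matrix.transpose_sub, Matrix.sub_mul, Matrix.mul_sub, Matrix.mul_sub,
        key2, key, hkeyT]
      abel
    have hZYO : Z = Y * O := by
      have h0 : Z - Y * O = 0 := by
        apply Matrix.self_mul_conjTranspose_eq_zero.mp
        rwa [conjTranspose_eq_transpose_of_trivial]
      exact sub_eq_zero.mp h0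
    have hMM : M * Mᵀ = G * G := by
      simp only [hMdef, transpose_mul, transpose_transpose, Matrix.mul_assoc]
      rw [← h2, gY, ← hGdef]
    have hOOt : O * Oᵀ = 1 := by
      rw [hOdef, transpose_mul, hGinvsym, Matrix.mul_assoc, ← Matrix.mul_assoc M,
        hMM, Matrix.mul_assoc, hGG, Matrix.mul_one, hGG']
    exact ⟨O, mul_eq_one_comm.mp hOOt, hZYO⟩
  · rintro ⟨O, hO, rfl⟩
    have hO' : O * Oᵀ = 1 := mul_eq_one_comm.mpr hO
    rw [transpose_mul, Matrix.mul_assoc, ← Matrix.mul_assoc O, hO', Matrix.one_mul]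
end
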